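/- arXiv:2507.07771 — 2 statements merged into one kernel-verified Lean document; each statement's English description precedes it below -/
import Mathlib

section
/- Let τ₊, τ₋ > 0 with τ₊ + τ₋ = 1, and let α, β ≥ 0 with α + β = 1 and α τ₋ - β τ₊ ≠ 0. Let p₊, p₋ be densities, p̃(x) = α p₊(x) + β p₋(x), and p(x) = τ₊ p₊(x) + τ₋ p₋(x). Then for any bounded measurable loss ℓ: ℝ × {-1,1} → ℝ and any bounded measurable g, the supervised risk R(g) = τ₊ E_{p₊}[ℓ(g(x),+1)] + τ₋ E_{p₋}[ℓ(g(x),-1)] equals (τ₊τ₋/(ατ₋ - βτ₊)) E_{p̃}[ℓ(g(x),+1) - ℓ(g(x),-1)] + E_p[(ατ₋ ℓ(g(x),-1) - βτ₊ ℓ(g(x),+1))/(ατ₋ - βτ₊)]. -/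
open MeasureTheory

/-! The identity already holds pointwise for the integrands: expanding the right-hand side, the
cross terms `ℓ(g x, +1) p₋(x)` and `ℓ(g x, -1) p₊(x)` cancel, while `ℓ(g x, ±1) p_±(x)` keeps the
coefficient `τ_± (α τ₋ - β τ₊) / (α τ₋ - β τ₊)`. Bounded losses times integrable densities are integrable,
so the identity integrates term by term. -/

theorem risk_integrand_eq {τp τm α β : ℝ} (hne : α * τm - β * τp ≠ 0) (lp lm pp pm : ℝ) :
    τp * (lp * pp) + τm * (lm * pm)
      = τp * τm / (α * τm - β * τp) * ((lp - lm) * (α * pp + β * pm))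
        + (α * τm * lm - β * τp * lp) / (α * τm - β * τp) * (τp * pp + τm * pm) := by
  rw [div_mul_eq_mul_div, div_mul_eq_mul_div, ← add_div, eq_div_iff hne]
  ring

theorem integral_risk_eq_corrupted_add_unlabeled {X : Type*} [MeasurableSpace X] {μ : Measure X}
    {fp fm pp pm : X → ℝ} (hfp : MemLp fp ⊤ μ) (hfm : MemLp fm ⊤ μ)
    (hpp : Integrable pp μ) (hpm : Integrable pm μ)
    {τp τm α β : ℝ} (hne : α * τm - β * τp ≠ 0) :
    τp * (∫ x, fp x * pp x ∂μ) + τm * (∫ x, fm x * pm x ∂μ)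
      = (τp * τm / (α * τm - β * τp)) * (∫ x, (fp x - fm x) * (α * pp x + β * pm x) ∂μ)
        + ∫ x, ((α * τm * fm x - β * τp * fp x) / (α * τm - β * τp)) *
            (τp * pp x + τm * pm x) ∂μ := by
  have hpos : Integrable (fun x => fp x * pp x) μ := hpp.mul_of_top_right hfp
  have hneg : Integrable (fun x => fm x * pm x) μ := hpm.mul_of_top_right hfm
  have hcorrupted : Integrable (fun x => (fp x - fm x) * (α * pp x + β * pm x)) μ :=
    ((hpp.const_mul α).add (hpm.const_mul β)).mul_of_top_right (hfp.sub hfm)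
  have hweight : MemLp (fun x => (α * τm * fm x - β * τp * fp x) / (α * τm - β * τp)) ⊤ μ := by
    simpa only [div_eq_mul_inv, Pi.sub_apply] using
      ((hfm.const_mul (α * τm)).sub (hfp.const_mul (β * τp))).mul_const (α * τm - β * τp)⁻¹
  have hunlabeled : Integrable (fun x => ((α * τm * fm x - β * τp * fp x) / (α * τm - β * τp)) *
      (τp * pp x + τm * pm x)) μ :=
    ((hpp.const_mul τp).add (hpm.const_mul τm)).mul_of_top_right hweight
  rw [← integral_const_mul, ← integral_const_mul, ← integral_const_mul,
    ← integral_add (hpos.const_mul _) (hneg.const_mul _),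
    ← integral_add (hcorrupted.const_mul _) hunlabeled]
  simp only [risk_integrand_eq hne]

theorem stmt4_general (d : ℕ) (τp τm : ℝ)
    (α β : ℝ) (hne : α * τm - β * τp ≠ 0)
    (pp pm : (Fin d → ℝ) → ℝ)
    (hppint : Integrable pp) (hpmint : Integrable pm)
    (ℓ : ℝ → Bool → ℝ) (hℓmeas : ∀ b, Measurable (fun z => ℓ z b))
    (Cℓ : ℝ) (hℓbd : ∀ z b, |ℓ z b| ≤ Cℓ)
    (g : (Fin d → ℝ) → ℝ) (hg : Measurable g) :
    τp * (∫ x, ℓ (g x) true * pp x) + τm * (∫ x, ℓ (g x) false * pm x)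
      = (τp * τm / (α * τm - β * τp)) *
          (∫ x, (ℓ (g x) true - ℓ (g x) false) * (α * pp x + β * pm x))
        + ∫ x, ((α * τm * ℓ (g x) false - β * τp * ℓ (g x) true) / (α * τm - β * τp)) *
            (τp * pp x + τm * pm x) := by
  have hloss : ∀ b, MemLp (fun x => ℓ (g x) b) ⊤ :=
    fun b => memLp_top_of_bound ((hℓmeas b).comp hg).aestronglyMeasurable Cℓ
      (ae_of_all _ fun x => hℓbd (g x) b)
  exact integral_risk_eq_corrupted_add_unlabeled (hloss true) (hloss false) hppint hpmint hne

/-- Theorem 3, symmetric unbiased risk rewriting.  Labels are encoded as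
`Bool` (`true ↦ +1`, `false ↦ -1`).  The supervised risk
`R(g) = τ₊ E_{p₊}[ℓ(g x, +1)] + τ₋ E_{p₋}[ℓ(g x, -1)]` equals the combination of
expectations over the corrupted marginal `p̃ = α p₊ + β p₋` and the unlabeled
marginal `p = τ₊ p₊ + τ₋ p₋`. -/
theorem stmt4 (d : ℕ) (τp τm : ℝ) (hτp : 0 < τp) (hτm : 0 < τm) (hsum : τp + τm = 1)
    (α β : ℝ) (hα : 0 ≤ α) (hβ : 0 ≤ β) (hαβ : α + β = 1) (hne : α * τm - β * τp ≠ 0)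
    (pp pm : (Fin d → ℝ) → ℝ)
    (hppos : ∀ x, 0 ≤ pp x) (hmpos : ∀ x, 0 ≤ pm x)
    (hppint : Integrable pp) (hpmint : Integrable pm)
    (hpp1 : ∫ x, pp x = 1) (hpm1 : ∫ x, pm x = 1)
    (ℓ : ℝ → Bool → ℝ) (hℓmeas : ∀ b, Measurable (fun z => ℓ z b))
    (Cℓ : ℝ) (hℓbd : ∀ z b, |ℓ z b| ≤ Cℓ)
    (g : (Fin d → ℝ) → ℝ) (hg : Measurable g) (Cg : ℝ) (hgbd : ∀ x, |g x| ≤ Cg) :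
    τp * (∫ x, ℓ (g x) true * pp x) + τm * (∫ x, ℓ (g x) false * pm x)
      = (τp * τm / (α * τm - β * τp)) *
          (∫ x, (ℓ (g x) true - ℓ (g x) false) * (α * pp x + β * pm x))
        + ∫ x, ((α * τm * ℓ (g x) false - β * τp * ℓ (g x) true) / (α * τm - β * τp)) *
            (τp * pp x + τm * pm x) :=
  stmt4_general d τp τm α β hne pp pm hppint hpmint ℓ hℓmeas Cℓ hℓbd g hg
end

section
/- Let N ≥ 2, τ₊, τ₋ > 0 with τ₊ + τ₋ = 1. For the mixed-class N-tuple setting with Y_sub = {y ∈ {-1,1}^N : y not all equal}, for every position j the coefficient α_j = (Σ_{y ∈ Y_sub, y_j = +1} Π_k τ_{y_k})/Z equals (Σ_{k=1}^{N-1} C(N-1, k) τ₊^{N-k} τ₋^{k}) / (Σ_{k=1}^{N-1} C(N, N-k) τ₊^{N-k} τ₋^{k}), independent of j. -/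
/-! The product weights make the coordinates independent with total mass `(τ₊ + τ₋)^N = 1`, so
the tuples with `y_j = +1` carry weight `τ₊`. Removing the two constant tuples leaves the
numerator `τ₊ - τ₊^N` and `Z = 1 - τ₊^N - τ₋^N`, and the binomial theorem identifies the two sums
on the right with these same quantities. -/

open Finset

theorem sum_filter_apply_eq_mul_pow {ι α R : Type*} [Fintype ι] [DecidableEq ι] [Fintype α]
    [DecidableEq α] [CommSemiring R] (w : α → R) (j : ι) (a : α) :
    ∑ y ∈ univ.filter (fun y : ι → α => y j = a), ∏ k, w (y k)
      = w a * (∑ c, w c) ^ (Fintype.card ι - 1) := by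
  have hpi : univ.filter (fun y : ι → α => y j = a)
      = Fintype.piFinset (Function.update (fun _ => univ) j ({a} : Finset α)) := by
    ext y
    simp only [mem_filter, mem_univ, true_and, Fintype.mem_piFinset]
    refine ⟨fun h i => ?_, fun h => by simpa using h j⟩
    rcases eq_or_ne i j with rfl | hi <;> simp_all
  rw [hpi, ← prod_univ_sum, Fintype.prod_eq_mul_prod_compl j,
    prod_congr rfl fun i hi => by rw [Function.update_of_ne (by simpa using hi)]]
  simp [card_compl]

theorem sum_filter_ne_const {ι R : Type*} [Fintype ι] [DecidableEq ι] [Nonempty ι]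
    [AddCommGroup R] (f : (ι → Bool) → R) :
    ∑ y ∈ univ.filter (fun y : ι → Bool => y ≠ (fun _ => true) ∧ y ≠ (fun _ => false)), f y
      = ∑ y, f y - f (fun _ => true) - f (fun _ => false) := by
  have hne : (fun _ : ι => false) ≠ fun _ => true := fun h =>
    Bool.false_ne_true (congrFun h (Classical.arbitrary ι))
  have hs : univ.filter (fun y : ι → Bool => y ≠ (fun _ => true) ∧ y ≠ (fun _ => false))
      = (univ.erase fun _ => true).erase fun _ => false := by
    ext y; simp [and_comm]
  rw [hs, sum_erase_eq_sub (by simpa using hne), sum_erase_eq_sub (mem_univ _)]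

theorem sum_filter_ne_const_filter_apply {ι R : Type*} [Fintype ι] [DecidableEq ι]
    [AddCommGroup R] (f : (ι → Bool) → R) (j : ι) :
    ∑ y ∈ (univ.filter (fun y : ι → Bool => y ≠ (fun _ => true) ∧ y ≠ (fun _ => false))).filter
        (fun y => y j = true), f y
      = ∑ y ∈ univ.filter (fun y : ι → Bool => y j = true), f y - f (fun _ => true) := by
  have hs : (univ.filter (fun y : ι → Bool => y ≠ (fun _ => true) ∧ y ≠ (fun _ => false))).filter
        (fun y => y j = true) = (univ.filter fun y : ι → Bool => y j = true).erase fun _ => true := by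
    ext y
    simp only [mem_filter, mem_univ, true_and, mem_erase]
    constructor
    · rintro ⟨⟨hT, -⟩, hj⟩; exact ⟨hT, hj⟩
    · rintro ⟨hT, hj⟩; exact ⟨⟨hT, fun h => by simp [h] at hj⟩, hj⟩
  rw [hs, sum_erase_eq_sub (by simp)]

theorem sum_Icc_choose_mul_pow {R : Type*} [CommRing R] (x y : R) (n : ℕ) :
    ∑ k ∈ Icc 1 n, n.choose k * x ^ (n - k) * y ^ k = (x + y) ^ n - x ^ n := by
  rw [add_comm, add_pow, sum_range_succ', ← Ico_add_one_right_eq_Icc, sum_Ico_eq_sum_range]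
  simp only [Nat.choose_zero_right, Nat.sub_zero, pow_zero, Nat.cast_one, mul_one, one_mul,
    add_sub_cancel_right, Nat.add_sub_cancel]
  exact sum_congr rfl fun k _ => by rw [add_comm 1 k]; ring

theorem sum_Icc_choose_mul_pow_succ {R : Type*} [CommRing R] (x y : R) (n : ℕ) :
    ∑ k ∈ Icc 1 n, n.choose k * x ^ (n + 1 - k) * y ^ k = x * ((x + y) ^ n - x ^ n) := by
  rw [← sum_Icc_choose_mul_pow, mul_sum]
  refine sum_congr rfl fun k hk => ?_
  rw [Nat.sub_add_comm (mem_Icc.1 hk).2, pow_succ]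
  ring

theorem sum_Icc_choose_sub_mul_pow {R : Type*} [CommRing R] (x y : R) (n : ℕ) :
    ∑ k ∈ Icc 1 n, (n + 1).choose (n + 1 - k) * x ^ (n + 1 - k) * y ^ k
      = (x + y) ^ (n + 1) - x ^ (n + 1) - y ^ (n + 1) := by
  have hsymm : ∀ k ∈ Icc 1 n, ((n + 1).choose (n + 1 - k) : R) = (n + 1).choose k :=
    fun k hk => by rw [Nat.choose_symm (by linarith [(mem_Icc.1 hk).2])]
  rw [sum_congr rfl fun k hk => by rw [hsymm k hk], ← sum_Icc_choose_mul_pow,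
    sum_Icc_succ_top (by omega)]
  simp

theorem stmt8_general (N : ℕ) (τp τm : ℝ)
    (hsum : τp + τm = 1)
    (τ : Bool → ℝ) (hτ : τ = fun b => if b then τp else τm)
    (Ysub : Finset (Fin N → Bool))
    (hY : Ysub = univ.filter (fun y => y ≠ (fun _ => true) ∧ y ≠ (fun _ => false)))
    (Z : ℝ) (hZ : Z = ∑ y ∈ Ysub, ∏ k, τ (y k)) :
    ∀ j : Fin N,
      (∑ y ∈ Ysub.filter (fun y => y j = true), ∏ k, τ (y k)) / Z
        = (∑ k ∈ Icc 1 (N - 1), (N - 1).choose k * τp ^ (N - k) * τm ^ k)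
          / (∑ k ∈ Icc 1 (N - 1), N.choose (N - k) * τp ^ (N - k) * τm ^ k) := by
  intro j
  obtain ⟨n, rfl⟩ : ∃ n, N = n + 1 := Nat.exists_eq_succ_of_ne_zero j.pos.ne'
  have hτ_sum : ∑ b, τ b = 1 := by simp [hτ, hsum]
  subst hY hZ
  rw [sum_filter_ne_const_filter_apply, sum_filter_apply_eq_mul_pow, sum_filter_ne_const,
    ← Fintype.sum_pow, hτ_sum, Nat.add_sub_cancel, sum_Icc_choose_mul_pow_succ,
    sum_Icc_choose_sub_mul_pow, hsum]
  simp only [hτ, if_true, prod_const, card_univ, Fintype.card_fin]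
  congr 1
  ring

/-- Theorem 6: mixed-class coefficients.  For
`Y_sub = {y ∈ {-1,1}^N : y not all equal}` (labels as `Bool`), for every position `j`,
`α_j = (Σ_{k=1}^{N-1} C(N-1,k) τ₊^{N-k} τ₋^k) / (Σ_{k=1}^{N-1} C(N,N-k) τ₊^{N-k} τ₋^k)`,
independent of `j`. -/
theorem stmt8 (N : ℕ) (hN : 2 ≤ N) (τp τm : ℝ) (hτp : 0 < τp) (hτm : 0 < τm)
    (hsum : τp + τm = 1)
    (τ : Bool → ℝ) (hτ : τ = fun b => if b then τp else τm)
    (Ysub : Finset (Fin N → Bool))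
    (hY : Ysub = univ.filter (fun y => y ≠ (fun _ => true) ∧ y ≠ (fun _ => false)))
    (Z : ℝ) (hZ : Z = ∑ y ∈ Ysub, ∏ k, τ (y k)) :
    ∀ j : Fin N,
      (∑ y ∈ Ysub.filter (fun y => y j = true), ∏ k, τ (y k)) / Z
        = (∑ k ∈ Icc 1 (N - 1), (N - 1).choose k * τp ^ (N - k) * τm ^ k)
          / (∑ k ∈ Icc 1 (N - 1), N.choose (N - k) * τp ^ (N - k) * τm ^ k) :=
  stmt8_general N τp τm hsum τ hτ Ysub hY Z hZ
end
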